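/- The n-th root of the n-th Motzkin number converges to 3; i.e. Filter.Tendsto (fun n : ℕ => ((∑ t in Finset.range (n+1), n.choose (2*t) * catalan t : ℕ) : ℝ) ^ ((n : ℝ)⁻¹)) Filter.atTop (nhds 3). -/

import Mathlib

/-!
Pairing each odd term of the binomial expansion `3 ^ n = ∑ k, n.choose k * 2 ^ k` with the even
term before it shows that the even terms carry all of `3 ^ n` up to a factor `2 * n + 1`. The even
terms are `n.choose (2 * t) * 4 ^ t`, and `4 ^ t / ((2 * t + 1) * (t + 1)) ≤ catalan t ≤ 4 ^ t`,
so the Motzkin number lies between `3 ^ n / (2 * n + 2) ^ 3` and `3 ^ n`. Polynomial factors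
disappear under `n`-th roots.
-/

open Finset Filter Topology

theorem Finset.sum_range_two_mul {M : Type*} [AddCommMonoid M] (f : ℕ → M) (m : ℕ) :
    ∑ k ∈ range (2 * m), f k = ∑ i ∈ range m, (f (2 * i) + f (2 * i + 1)) := by
  induction m with
  | zero => simp
  | succ m ih =>
    rw [show 2 * (m + 1) = 2 * m + 1 + 1 by ring, sum_range_succ, sum_range_succ, ih,
      sum_range_succ, add_assoc]

namespace Nat

theorem add_one_pow_eq_sum_even_add_odd (x n : ℕ) :
    (x + 1) ^ n = ∑ i ∈ range (n + 1),
      (n.choose (2 * i) * x ^ (2 * i) + n.choose (2 * i + 1) * x ^ (2 * i + 1)) := by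
  have binomial : (x + 1) ^ n = ∑ k ∈ range (n + 1), n.choose k * x ^ k := by
    simp [add_pow, mul_comm]
  rw [← sum_range_two_mul (fun k => n.choose k * x ^ k), binomial]
  refine sum_subset (fun k hk => by simp only [mem_range] at hk ⊢; omega) fun k _ hk => ?_
  simp only [mem_range, not_lt] at hk
  simp [choose_eq_zero_of_lt (by omega : n < k)]

theorem sum_choose_two_mul_mul_pow_le (x n : ℕ) :
    ∑ i ∈ range (n + 1), n.choose (2 * i) * x ^ (2 * i) ≤ (x + 1) ^ n := by
  rw [add_one_pow_eq_sum_even_add_odd]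
  exact sum_le_sum fun i _ => Nat.le_add_right _ _

theorem choose_succ_le_mul_choose (n k : ℕ) : n.choose (k + 1) ≤ n * n.choose k :=
  calc n.choose (k + 1) ≤ n.choose (k + 1) * (k + 1) := Nat.le_mul_of_pos_right _ k.succ_pos
    _ = n.choose k * (n - k) := choose_succ_right_eq n k
    _ ≤ n * n.choose k := by rw [mul_comm]; exact Nat.mul_le_mul_right _ (sub_le n k)

theorem add_one_pow_le_mul_sum_choose_two_mul_mul_pow (x n : ℕ) :
    (x + 1) ^ n ≤ (n * x + 1) * ∑ i ∈ range (n + 1), n.choose (2 * i) * x ^ (2 * i) := by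
  rw [add_one_pow_eq_sum_even_add_odd, mul_sum]
  refine sum_le_sum fun i _ => ?_
  calc n.choose (2 * i) * x ^ (2 * i) + n.choose (2 * i + 1) * x ^ (2 * i + 1)
      ≤ n.choose (2 * i) * x ^ (2 * i) + n * n.choose (2 * i) * x ^ (2 * i + 1) := by
        gcongr; exact choose_succ_le_mul_choose n (2 * i)
    _ = (n * x + 1) * (n.choose (2 * i) * x ^ (2 * i)) := by ring

end Nat

theorem catalan_le_four_pow (n : ℕ) : catalan n ≤ 4 ^ n :=
  calc catalan n ≤ (n + 1) * catalan n := Nat.le_mul_of_pos_left _ n.succ_pos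
    _ = n.centralBinom := succ_mul_catalan_eq_centralBinom n
    _ ≤ 4 ^ n := Nat.centralBinom_le_four_pow n

theorem four_pow_le_mul_catalan (n : ℕ) : 4 ^ n ≤ (2 * n + 1) * (n + 1) * catalan n := by
  rw [mul_assoc, succ_mul_catalan_eq_centralBinom]
  exact Nat.four_pow_le_two_mul_add_one_mul_central_binom n

theorem tendsto_mul_natCast_add_pow_rpow_inv (b d : ℝ) (k : ℕ) (hb : 0 < b) :
    Tendsto (fun n : ℕ => ((b * n + d) ^ k) ^ (n : ℝ)⁻¹) atTop (𝓝 1) := by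
  have hlin : Tendsto (fun n : ℕ => b * n + d) atTop atTop :=
    tendsto_atTop_add_const_right _ d
      (tendsto_natCast_atTop_atTop.const_mul_atTop hb)
  refine ((tendsto_rpow_div_mul_add k b⁻¹ (-d / b) (inv_pos.2 hb).ne).comp hlin).congr' ?_
  filter_upwards [hlin.eventually_ge_atTop 0, eventually_ne_atTop 0] with n hpos hn
  have hexponent : (k : ℝ) / (b⁻¹ * (b * n + d) + -d / b) = k * (n : ℝ)⁻¹ := by
    field_simp; ring
  rw [Function.comp_apply, hexponent, Real.rpow_mul hpos, Real.rpow_natCast]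

theorem tendsto_rpow_inv_of_le_pow_of_pow_le_mul {a p : ℕ → ℝ} {c : ℝ} (hc : 0 ≤ c)
    (ha : ∀ n, 0 ≤ a n) (hp : ∀ n, 0 < p n) (hup : ∀ n, a n ≤ c ^ n)
    (hlow : ∀ n, c ^ n ≤ p n * a n) (hlim : Tendsto (fun n => p n ^ (n : ℝ)⁻¹) atTop (𝓝 1)) :
    Tendsto (fun n => a n ^ (n : ℝ)⁻¹) atTop (𝓝 c) := by
  have hlim' : Tendsto (fun n => c / p n ^ (n : ℝ)⁻¹) atTop (𝓝 (c / 1)) :=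
    tendsto_const_nhds.div hlim one_ne_zero
  rw [div_one] at hlim'
  refine tendsto_of_tendsto_of_tendsto_of_le_of_le' hlim' tendsto_const_nhds ?_ ?_
  all_goals filter_upwards [eventually_ne_atTop 0] with n hn
  · rw [div_le_iff₀' (Real.rpow_pos_of_pos (hp n) _), ← Real.mul_rpow (hp n).le (ha n)]
    calc c = (c ^ n) ^ (n : ℝ)⁻¹ := (Real.pow_rpow_inv_natCast hc hn).symm
      _ ≤ _ := Real.rpow_le_rpow (by positivity) (hlow n) (by positivity)
  · calc a n ^ (n : ℝ)⁻¹ ≤ (c ^ n) ^ (n : ℝ)⁻¹ := Real.rpow_le_rpow (ha n) (hup n) (by positivity)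
      _ = c := Real.pow_rpow_inv_natCast hc hn

def motzkin (n : ℕ) : ℕ := ∑ t ∈ range (n + 1), n.choose (2 * t) * catalan t

theorem motzkin_le_three_pow (n : ℕ) : motzkin n ≤ 3 ^ n :=
  calc motzkin n ≤ ∑ t ∈ range (n + 1), n.choose (2 * t) * 2 ^ (2 * t) :=
        sum_le_sum fun t _ => by rw [pow_mul]; gcongr; exact catalan_le_four_pow t
    _ ≤ 3 ^ n := Nat.sum_choose_two_mul_mul_pow_le 2 n

theorem three_pow_le_mul_motzkin (n : ℕ) : 3 ^ n ≤ (2 * n + 2) ^ 3 * motzkin n :=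
  calc 3 ^ n ≤ (n * 2 + 1) * ∑ t ∈ range (n + 1), n.choose (2 * t) * 2 ^ (2 * t) :=
        Nat.add_one_pow_le_mul_sum_choose_two_mul_mul_pow 2 n
    _ ≤ (2 * n + 1) * ((2 * n + 1) * (n + 1) * motzkin n) := by
        rw [mul_comm n]
        refine Nat.mul_le_mul_left _ ?_
        rw [motzkin, mul_sum]
        refine sum_le_sum fun t ht => ?_
        have : t ≤ n := by simp only [mem_range] at ht; omega
        calc n.choose (2 * t) * 2 ^ (2 * t)
            ≤ n.choose (2 * t) * ((2 * t + 1) * (t + 1) * catalan t) := by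
              rw [pow_mul]; gcongr; exact four_pow_le_mul_catalan t
          _ ≤ (2 * n + 1) * (n + 1) * (n.choose (2 * t) * catalan t) := by
              rw [mul_left_comm]; gcongr
    _ ≤ (2 * n + 2) ^ 3 * motzkin n := by
        rw [← mul_assoc]; exact Nat.mul_le_mul_right _ (by rw [pow_three]; gcongr <;> omega)

/-- The n-th root of the n-th Motzkin number converges to 3. -/
theorem motzkin_root_tendsto_three :
    Filter.Tendsto
      (fun n : ℕ =>
        ((∑ t ∈ Finset.range (n+1), n.choose (2*t) * catalan t : ℕ) : ℝ) ^ ((n : ℝ)⁻¹))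
      Filter.atTop (nhds 3) := by
  change Tendsto (fun n : ℕ => (motzkin n : ℝ) ^ (n : ℝ)⁻¹) atTop (𝓝 3)
  refine tendsto_rpow_inv_of_le_pow_of_pow_le_mul (p := fun n => (2 * n + 2) ^ 3) (by norm_num)
    (fun n => by positivity) (fun n => by positivity) (fun n => ?_) (fun n => ?_)
    (tendsto_mul_natCast_add_pow_rpow_inv 2 2 3 two_pos)
  · exact_mod_cast motzkin_le_three_pow n
  · exact_mod_cast three_pow_le_mul_motzkin n
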